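/- arXiv:2502.02394 — 5 statements merged into one kernel-verified Lean document; each statement's English description precedes it below -/
import Mathlib

section
/- Under Assumptions 1, 3 (strengthened contractivity), 4–5 and 7, let x ∈ 𝒳, θ > 0, let (𝐮*,q*) be an optimal pair of P_{N_p}(x,θ) with q* > 1, let w ∈ 𝒲, and set x⁺ := f(x,u*(0),w). Then the shifted pair (𝐮⁺,q⁺), with 𝐮⁺ := (u*(1),…,u*(q*−1)) and q⁺ := q*−1, is feasible for x⁺, i.e. φ(j;x⁺,𝐮⁺,0) ∈ 𝒳 ⊖ ℛ(j) for j = 0,…,q*−1; in particular x⁺ ∈ 𝒳 and P_{N_p}(x⁺,θ⁺) is feasible for every θ⁺ > 0. -/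
open Pointwise

noncomputable section

abbrev Vec (n : ℕ) := EuclideanSpace ℝ (Fin n)

/-- A class-K function: continuous (on `[0,∞)`), strictly increasing,
nonnegative, vanishing at `0`. -/
def ClassK (α : ℝ → ℝ) : Prop :=
  α 0 = 0 ∧ ContinuousOn α (Set.Ici 0) ∧ StrictMonoOn α (Set.Ici 0) ∧
    ∀ s, 0 ≤ s → 0 ≤ α s

/-- A class-K∞ function: class-K and unbounded. -/
def ClassKInf (α : ℝ → ℝ) : Prop :=
  ClassK α ∧ ∀ M : ℝ, ∃ s, 0 ≤ s ∧ M ≤ α s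

/-- Trajectory of the perturbed system: `φ(j; x, 𝐮, 𝐰)`. -/
def traj {n m r : ℕ} (f : Vec n → Vec m → Vec r → Vec n) (x : Vec n)
    (u : ℕ → Vec m) (w : ℕ → Vec r) : ℕ → Vec n
  | 0 => x
  | j + 1 => f (traj f x u w j) (u j) (w j)

/-- `min_{1 ≤ j ≤ q} g j`. -/
def minIcc (g : ℕ → ℝ) (q : ℕ) : ℝ := sInf (g '' Set.Icc 1 q)

/-- Pontryagin set difference `A ⊖ B`. -/
def pont {n : ℕ} (A B : Set (Vec n)) : Set (Vec n) := {x | ∀ b ∈ B, x + b ∈ A}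

/-- Data of the robust contraction-based MPC problem. -/
structure MPCSetup (n m r : ℕ) where
  /-- system dynamics -/
  f : Vec n → Vec m → Vec r → Vec n
  /-- state constraint set 𝒳 -/
  X : Set (Vec n)
  /-- input constraint set 𝒰 -/
  U : Set (Vec m)
  /-- disturbance bounds w̄ -/
  wbar : Fin r → ℝ
  /-- contractive function Γ -/
  Γ : Vec n → ℝ
  /-- moduli of continuity of f -/
  σx : Fin n → Fin n → ℝ → ℝ
  σu : Fin n → Fin m → ℝ → ℝ
  σw : Fin n → Fin r → ℝ → ℝ
  /-- modulus of continuity of Γ -/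
  σΓ : ℝ → ℝ
  /-- upper bounding K∞ function for Γ -/
  αΓ : ℝ → ℝ
  /-- contraction factor -/
  γ : ℝ
  /-- maximum prediction horizon -/
  Np : ℕ
  /-- the sets ℱ(j) -/
  Fset : ℕ → Set (Vec n)
  /-- the sets ℛ(j) -/
  Rset : ℕ → Set (Vec n)
  /-- stage cost -/
  ℓ : Vec n → Vec m → ℝ
  /-- upper bound on stage cost -/
  ℓbar : ℝ
  /-- lower bounding K function for the stage cost -/
  αℓ : ℝ → ℝ
  /-- moduli of continuity of the stage cost -/
  σℓx : ℝ → ℝ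
  σℓu : ℝ → ℝ
  /-- weight of the contraction term in the cost -/
  ξ : ℝ

namespace MPCSetup

variable {n m r : ℕ}

/-- The disturbance set 𝒲. -/
def W (S : MPCSetup n m r) : Set (Vec r) := {w | ∀ i, |w i| ≤ S.wbar i}

/-- Nominal (disturbance-free) trajectory `φ(j; x, 𝐮, 0)`. -/
def nom (S : MPCSetup n m r) (x : Vec n) (u : ℕ → Vec m) : ℕ → Vec n :=
  traj S.f x u fun _ => (0 : Vec r)

/-- Assumptions 1 (component-wise uniform continuity), 2 (constraint sets),
3 (strengthened contractivity), 4–5 (the sequences ℱ(j), ℛ(j)) and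
7 (stage cost), together with ξ > 0. -/
structure Assumptions (S : MPCSetup n m r) : Prop where
  hX_compact : IsCompact S.X
  hU_compact : IsCompact S.U
  hX_int : (interior S.X).Nonempty
  hU_int : (interior S.U).Nonempty
  -- Assumption 1
  hσx : ∀ i a, ClassK (S.σx i a)
  hσu : ∀ i b, ClassK (S.σu i b)
  hσw : ∀ i c, ClassK (S.σw i c)
  hf_cont : ∀ x ∈ S.X, ∀ u ∈ S.U, ∀ w ∈ S.W, ∀ x' ∈ S.X, ∀ u' ∈ S.U, ∀ w' ∈ S.W, ∀ i,
    |S.f x u w i - S.f x' u' w' i| ≤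
      (∑ a, S.σx i a (|x a - x' a|)) + (∑ b, S.σu i b (|u b - u' b|)) +
        ∑ c, S.σw i c (|w c - w' c|)
  -- Assumption 3 (strengthened contractivity)
  hΓ0 : S.Γ 0 = 0
  hΓpos : ∀ x, x ≠ 0 → 0 < S.Γ x
  hΓnonneg : ∀ x, 0 ≤ S.Γ x
  hσΓ : ClassK S.σΓ
  hΓuc : ∀ x ∈ S.X, ∀ x' ∈ S.X, |S.Γ x - S.Γ x'| ≤ S.σΓ ‖x - x'‖
  hαΓ : ClassKInf S.αΓ
  hΓub : ∀ x ∈ S.X, S.Γ x ≤ S.αΓ ‖x‖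
  hγ : S.γ ∈ Set.Ioo (0 : ℝ) 1
  hNp : 1 ≤ S.Np
  hcontract : ∀ x ∈ S.X, ∃ u : ℕ → Vec m, (∀ j < S.Np, u j ∈ S.U) ∧
    (∀ j ≤ S.Np, S.nom x u j ∈ pont S.X (S.Rset j)) ∧
    minIcc (fun j => S.Γ (S.nom x u j)) S.Np ≤ S.γ * S.Γ x
  -- Assumptions 4–5
  hF0 : S.Fset 0 = {z | ∀ i, |z i| ≤ ∑ a, S.σw i a (S.wbar a)}
  hR0 : S.Rset 0 = {0}
  hF : ∀ (x : Vec n) (u : ℕ → Vec m), (∀ j, u j ∈ S.U) →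
    (∀ j, S.nom x u j ∈ S.X) →
    ∀ x' : Vec n, x' - x ∈ S.Fset 0 → ∀ j, 1 ≤ j →
      S.nom x' u j ∈ {S.nom x u j} + S.Fset j
  hR : ∀ (x : Vec n) (u : ℕ → Vec m), (∀ j, u j ∈ S.U) →
    (∀ j, S.nom x u j ∈ S.X) →
    ∀ w : ℕ → Vec r, (∀ j, w j ∈ S.W) → ∀ j, 1 ≤ j →
      traj S.f x u w j ∈ {S.nom x u j} + S.Rset j
  hRNp : 0 ∈ pont S.X (S.Rset S.Np)
  hFR : ∀ j, S.Fset j + S.Rset j ⊆ S.Rset (j + 1)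
  -- Assumption 7
  hℓbar : 0 < S.ℓbar
  hℓ_bounds : ∀ x ∈ S.X, ∀ u ∈ S.U, 0 ≤ S.ℓ x u ∧ S.ℓ x u ≤ S.ℓbar
  hαℓ : ClassK S.αℓ
  hℓ_lb : ∀ x ∈ S.X, ∀ u ∈ S.U, S.αℓ ‖x‖ ≤ S.ℓ x u
  hσℓx : ClassK S.σℓx
  hσℓu : ClassK S.σℓu
  hℓ_uc : ∀ x ∈ S.X, ∀ u ∈ S.U, ∀ x' ∈ S.X, ∀ u' ∈ S.U,
    |S.ℓ x u - S.ℓ x' u'| ≤ S.σℓx ‖x - x'‖ + S.σℓu ‖u - u'‖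
  hξ : 0 < S.ξ

/-- A pair (𝐮, q) is feasible for `P_{N_p}(x, θ)`. -/
def Feasible (S : MPCSetup n m r) (x : Vec n) (u : ℕ → Vec m) (q : ℕ) : Prop :=
  q ∈ Set.Icc 1 S.Np ∧ (∀ j < q, u j ∈ S.U) ∧
    ∀ j ≤ q, S.nom x u j ∈ pont S.X (S.Rset j)

/-- Cost `V_{N_p}(x, θ, 𝐮, q)`. -/
def cost (S : MPCSetup n m r) (x : Vec n) (θ : ℝ) (u : ℕ → Vec m) (q : ℕ) : ℝ :=
  θ * ∑ j ∈ Finset.range q, S.ℓ (S.nom x u j) (u j) +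
    S.ξ * minIcc (fun j => S.Γ (S.nom x u j)) q

/-- Optimal value `V*_{N_p}(x, θ)`. -/
def Vstar (S : MPCSetup n m r) (x : Vec n) (θ : ℝ) : ℝ :=
  sInf {c | ∃ u q, S.Feasible x u q ∧ c = S.cost x θ u q}

/-- An optimal pair: a feasible pair attaining the optimal value, with the
smallest horizon among all feasible minimizers. -/
def OptimalPair (S : MPCSetup n m r) (x : Vec n) (θ : ℝ) (u : ℕ → Vec m) (q : ℕ) : Prop :=
  S.Feasible x u q ∧ S.cost x θ u q = S.Vstar x θ ∧
    ∀ u' q', S.Feasible x u' q' → S.cost x θ u' q' = S.Vstar x θ → q ≤ q'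

/-- The θ-update rule `f_θ`. -/
def fθ (S : MPCSetup n m r) (ε ν : ℝ) (x : Vec n) (θ' : ℝ) : ℝ :=
  if θ' < S.Γ x then θ' else max ε (ν * S.Γ x)

/-- Additional data: the RCIS Ω, the constant ω and `Γ_max := max_{x ∈ 𝒳} Γ(x)`. -/
structure Ext (S : MPCSetup n m r) where
  Ω : Set (Vec n)
  ω : ℝ
  Γmax : ℝ

/-- Assumption 6 (robust controlled invariant set) together with the
properties of ω and Γ_max. -/
structure ExtAssumptions (S : MPCSetup n m r) (E : S.Ext) : Prop where
  hΩX : E.Ω ⊆ S.X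
  hΩinv : ∀ x ∈ E.Ω, ∃ u ∈ S.U, ∀ w ∈ S.W, S.f x u w ∈ E.Ω
  hΩctrl : ∀ x ∈ E.Ω, ∃ u ∈ S.U, S.f x u 0 ∈ pont S.X (S.Rset 1)
  hΩR1 : 0 ∈ pont E.Ω (S.Rset 1)
  hω : 0 < E.ω
  hωsub : {x | S.Γ x ≤ E.ω} ⊆ pont E.Ω (S.Rset 1)
  hΓmax : IsGreatest (S.Γ '' S.X) E.Γmax
  hΓmax_pos : 0 < E.Γmax

end MPCSetup

/-!
The nominal trajectory of the shifted input from `x⁺ = f(x, u*(0), w)` differs from the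
nominal trajectory from `f(x, u*(0), 0)`, which is the tail of the optimal one, by an element of
`ℱ(j)`, because `x⁺ - f(x, u*(0), 0) ∈ ℱ(0)` by the continuity bound of Assumption 1.
Since the tail lies in `𝒳 ⊖ ℛ(j + 1)` and `ℱ(j) ⊕ ℛ(j) ⊆ ℛ(j + 1)`, the shifted trajectory lies
in `𝒳 ⊖ ℛ(j)`. Assumption 4 only speaks about input sequences that keep the nominal state in `𝒳`
forever, so the shifted input is first extended to such a sequence; this is possible because,
by contractivity, every state of `𝒳` has an admissible input keeping the next state in `𝒳`.
-/

section Pontryagin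

variable {n : ℕ} {A B C F : Set (Vec n)} {z c : Vec n}

theorem mem_of_mem_pont (hz : z ∈ pont A B) (h0 : (0 : Vec n) ∈ B) : z ∈ A := by
  simpa using hz 0 h0

theorem add_mem_pont (hz : z ∈ pont A C) (hc : c ∈ F) (hFB : F + B ⊆ C) :
    z + c ∈ pont A B := fun b hb => by
  simpa [add_assoc] using hz (c + b) (hFB (Set.add_mem_add hc hb))

end Pontryagin

section Trajectory

variable {n m r : ℕ} (f : Vec n → Vec m → Vec r → Vec n)

theorem traj_congr (x : Vec n) {u u' : ℕ → Vec m} (w : ℕ → Vec r) {j : ℕ}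
    (h : ∀ k < j, u k = u' k) : traj f x u w j = traj f x u' w j := by
  induction j with
  | zero => rfl
  | succ j ih =>
    simp only [traj, ih fun k hk => h k (by omega), h j (by omega)]

theorem traj_add (x : Vec n) (u : ℕ → Vec m) (w : ℕ → Vec r) (k j : ℕ) :
    traj f x u w (k + j) =
      traj f (traj f x u w k) (fun i => u (k + i)) (fun i => w (k + i)) j := by
  induction j with
  | zero => rfl
  | succ j ih => rw [← add_assoc, traj, traj, ih]

end Trajectory

namespace MPCSetup

variable {n m r : ℕ} {S : MPCSetup n m r}

theorem nom_congr (x : Vec n) {u u' : ℕ → Vec m} {j : ℕ} (h : ∀ k < j, u k = u' k) :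
    S.nom x u j = S.nom x u' j :=
  traj_congr S.f x _ h

theorem nom_add (x : Vec n) (u : ℕ → Vec m) (k j : ℕ) :
    S.nom x u (k + j) = S.nom (S.nom x u k) (fun i => u (k + i)) j :=
  traj_add S.f x u _ k j

theorem nom_succ_eq_nom_shift (x : Vec n) (u : ℕ → Vec m) (j : ℕ) :
    S.nom x u (j + 1) = S.nom (S.f x (u 0) 0) (fun i => u (i + 1)) j := by
  rw [add_comm, nom_add]
  simp only [add_comm 1]
  rfl

theorem zero_mem_W {w : Vec r} (hw : w ∈ S.W) : (0 : Vec r) ∈ S.W := fun i => by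
  simpa using (abs_nonneg _).trans (hw i)

theorem exists_viable_input (hstep : ∀ y ∈ S.X, ∃ b ∈ S.U, S.f y b 0 ∈ S.X) {y : Vec n}
    (hy : y ∈ S.X) : ∃ v : ℕ → Vec m, (∀ j, v j ∈ S.U) ∧ ∀ j, S.nom y v j ∈ S.X := by
  choose κ hκU hκX using hstep
  let s : ℕ → S.X := fun j =>
    Nat.rec ⟨y, hy⟩ (fun _ z => ⟨S.f z.1 (κ z.1 z.2) 0, hκX z.1 z.2⟩) j
  have hs : ∀ j, S.nom y (fun i => κ (s i).1 (s i).2) j = (s j).1 := by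
    intro j
    induction j with
    | zero => rfl
    | succ j ih => exact congrArg (fun z => S.f z _ 0) ih
  exact ⟨fun j => κ (s j).1 (s j).2, fun j => hκU _ _, fun j => by rw [hs]; exact (s j).2⟩

theorem exists_viable_extension (hstep : ∀ y ∈ S.X, ∃ b ∈ S.U, S.f y b 0 ∈ S.X)
    {y : Vec n} {u : ℕ → Vec m} {q : ℕ} (hu : ∀ j < q, u j ∈ S.U)
    (hX : ∀ j ≤ q, S.nom y u j ∈ S.X) :
    ∃ v : ℕ → Vec m, (∀ j < q, v j = u j) ∧ (∀ j, v j ∈ S.U) ∧ ∀ j, S.nom y v j ∈ S.X := by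
  classical
  obtain ⟨v', hv'U, hv'X⟩ := exists_viable_input hstep (hX q le_rfl)
  set v : ℕ → Vec m := fun j => if j < q then u j else v' (j - q)
  have hvu : ∀ j < q, v j = u j := fun j hj => if_pos hj
  have hnom : ∀ j ≤ q, S.nom y v j = S.nom y u j := fun j hj =>
    nom_congr y fun k hk => hvu k (by omega)
  refine ⟨v, hvu, fun j => ?_, fun j => ?_⟩
  · by_cases hj : j < q
    · simpa [v, hj] using hu j hj
    · simpa [v, hj] using hv'U (j - q)
  · rcases le_or_gt j q with hj | hj
    · exact hnom j hj ▸ hX j hj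
    · obtain ⟨k, rfl⟩ := Nat.exists_eq_add_of_le hj.le
      have htail : (fun i => v (q + i)) = v' := by funext i; simp [v]
      rw [nom_add, hnom q le_rfl, htail]
      exact hv'X k

namespace Assumptions

variable (hA : S.Assumptions)
include hA

theorem zero_mem_Fset_zero (h0W : (0 : Vec r) ∈ S.W) : (0 : Vec n) ∈ S.Fset 0 := by
  rw [hA.hF0]
  intro i
  simpa using Finset.sum_nonneg fun a _ => (hA.hσw i a).2.2.2 _ (by simpa using h0W a)

theorem zero_mem_Rset_succ {j : ℕ} (hF : (0 : Vec n) ∈ S.Fset j) (hR : (0 : Vec n) ∈ S.Rset j) :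
    (0 : Vec n) ∈ S.Rset (j + 1) := by
  simpa using hA.hFR j (Set.add_mem_add hF hR)

theorem zero_mem_Rset_zero : (0 : Vec n) ∈ S.Rset 0 := by
  rw [hA.hR0]; rfl

theorem exists_step_mem (h0W : (0 : Vec r) ∈ S.W) :
    ∀ y ∈ S.X, ∃ b ∈ S.U, S.f y b 0 ∈ S.X := by
  intro y hy
  obtain ⟨u, huU, hnom, -⟩ := hA.hcontract y hy
  have h0R := hA.zero_mem_Rset_succ (hA.zero_mem_Fset_zero h0W) hA.zero_mem_Rset_zero
  exact ⟨u 0, huU 0 hA.hNp, mem_of_mem_pont (hnom 1 hA.hNp) h0R⟩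

theorem nom_mem_add_Fset {x : Vec n} {u : ℕ → Vec m} (hu : ∀ j, u j ∈ S.U)
    (hX : ∀ j, S.nom x u j ∈ S.X) {x' : Vec n} (hx' : x' - x ∈ S.Fset 0) (j : ℕ) :
    ∃ c ∈ S.Fset j, S.nom x' u j = S.nom x u j + c := by
  rcases Nat.eq_zero_or_pos j with rfl | hj
  · exact ⟨x' - x, hx', (add_sub_cancel x x').symm⟩
  · have h := hA.hF x u hu hX x' hx' j hj
    rw [Set.singleton_add] at h
    obtain ⟨c, hc, hxc⟩ := h
    exact ⟨c, hc, hxc.symm⟩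

theorem zero_mem_Fset (h0W : (0 : Vec r) ∈ S.W) (j : ℕ) : (0 : Vec n) ∈ S.Fset j := by
  obtain ⟨y, hy⟩ := hA.hX_int
  obtain ⟨v, hvU, hvX⟩ :=
    exists_viable_input (hA.exists_step_mem h0W) (interior_subset hy)
  obtain ⟨c, hc, hyc⟩ :=
    hA.nom_mem_add_Fset hvU hvX (x' := y) (by simpa using hA.zero_mem_Fset_zero h0W) j
  rwa [left_eq_add.mp hyc] at hc

theorem zero_mem_Rset (h0W : (0 : Vec r) ∈ S.W) (j : ℕ) : (0 : Vec n) ∈ S.Rset j := by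
  induction j with
  | zero => exact hA.zero_mem_Rset_zero
  | succ j ih => exact hA.zero_mem_Rset_succ (hA.zero_mem_Fset h0W j) ih

theorem sub_mem_Fset_zero {x : Vec n} (hx : x ∈ S.X) {b : Vec m} (hb : b ∈ S.U)
    {w : Vec r} (hw : w ∈ S.W) : S.f x b w - S.f x b 0 ∈ S.Fset 0 := by
  rw [hA.hF0]
  intro i
  have hσx0 : ∀ a, S.σx i a 0 = 0 := fun a => (hA.hσx i a).1
  have hσu0 : ∀ c, S.σu i c 0 = 0 := fun c => (hA.hσu i c).1
  calc |(S.f x b w - S.f x b 0) i|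
      ≤ (∑ a, S.σx i a |x a - x a|) + (∑ c, S.σu i c |b c - b c|) +
          ∑ c, S.σw i c |w c - (0 : Vec r) c| :=
        hA.hf_cont x hx b hb w hw x hx b hb 0 (zero_mem_W hw) i
    _ = ∑ c, S.σw i c |w c| := by
        simp [hσx0, hσu0]
    _ ≤ ∑ c, S.σw i c (S.wbar c) := Finset.sum_le_sum fun c _ =>
        (hA.hσw i c).2.2.1.monotoneOn (Set.mem_Ici.mpr (abs_nonneg _))
          (Set.mem_Ici.mpr ((abs_nonneg _).trans (hw c))) (hw c)

theorem nom_shift_mem_pont {x : Vec n} (hx : x ∈ S.X) {u : ℕ → Vec m} {q : ℕ}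
    (hu : ∀ j < q, u j ∈ S.U) (hnom : ∀ j ≤ q, S.nom x u j ∈ pont S.X (S.Rset j))
    (hq : 1 ≤ q) {w : Vec r} (hw : w ∈ S.W) :
    ∀ j ≤ q - 1, S.nom (S.f x (u 0) w) (fun i => u (i + 1)) j ∈ pont S.X (S.Rset j) := by
  have h0W := zero_mem_W hw
  have hu0 : u 0 ∈ S.U := hu 0 hq
  obtain ⟨v, hvu, hvU, hvX⟩ := exists_viable_extension (hA.exists_step_mem h0W)
    (y := S.f x (u 0) 0) (q := q - 1) (fun j hj => hu (j + 1) (by omega)) fun j hj => by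
      rw [← nom_succ_eq_nom_shift]
      exact mem_of_mem_pont (hnom (j + 1) (by omega)) (hA.zero_mem_Rset h0W _)
  intro j hj
  obtain ⟨c, hc, hxc⟩ := hA.nom_mem_add_Fset hvU hvX (hA.sub_mem_Fset_zero hx hu0 hw) j
  have hagree : ∀ k < j, u (k + 1) = v k := fun k hk => (hvu k (by omega)).symm
  rw [nom_congr _ hagree, hxc, nom_congr _ fun k hk => (hagree k hk).symm,
    ← nom_succ_eq_nom_shift]
  exact add_mem_pont (hnom (j + 1) (by omega)) hc (hA.hFR j)

end Assumptions

end MPCSetup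

/-- Lemma 3, recursive feasibility for q* > 1: the shifted
pair `(𝐮⁺, q*−1)` is feasible for the perturbed successor state
`x⁺ = f(x, u*(0), w)`; in particular `x⁺ ∈ 𝒳`. -/
theorem shifted_pair_feasible {n m r : ℕ} (S : MPCSetup n m r)
    (hA : S.Assumptions) :
    ∀ x ∈ S.X, ∀ θ : ℝ, 0 < θ → ∀ (u : ℕ → Vec m) (q : ℕ),
      S.OptimalPair x θ u q → 1 < q →
      ∀ w ∈ S.W,
        S.f x (u 0) w ∈ S.X ∧
          S.Feasible (S.f x (u 0) w) (fun j => u (j + 1)) (q - 1) := by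
  intro x hx θ _ u q hopt hq w hw
  obtain ⟨⟨⟨-, hqNp⟩, hu, hnom⟩, -, -⟩ := hopt
  have hshift := hA.nom_shift_mem_pont hx hu hnom hq.le hw
  have hxX : S.f x (u 0) w ∈ S.X :=
    mem_of_mem_pont (hshift 0 (Nat.zero_le _)) hA.zero_mem_Rset_zero
  exact ⟨hxX, ⟨by omega, by omega⟩, fun j hj => hu (j + 1) (by omega), hshift⟩
end
end

section
/- Under Assumption 1, define for w ∈ ℝ^r and i = 1,…,n: c_{i,0}(w) := Σ_{c=1}^r σ_{w,ic}(|w_c|), and recursively c_{i,j}(w) := Σ_{b=1}^n σ_{x,ib}(c_{b,j−1}(w)) for j ≥ 1. Let w ∈ 𝒲, let x, x̌ ∈ 𝒳 satisfy |x̌_i − x_i| ≤ c_{i,0}(w) for all i, and let 𝐮 be an input sequence with values in 𝒰 such that φ(j;x,𝐮,0) ∈ 𝒳 and φ(j;x̌,𝐮,0) ∈ 𝒳 for j = 0,…,J. Then |φ(j;x̌,𝐮,0)_i − φ(j;x,𝐮,0)_i| ≤ c_{i,j}(w) for every i = 1,…,n and every j = 0,…,J. -/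
open Pointwise

noncomputable section

/-- The functions `c_{i,j}(w)`: `c_{i,0}(w) = Σ_c σ_{w,ic}(|w_c|)` and
`c_{i,j}(w) = Σ_b σ_{x,ib}(c_{b,j−1}(w))` for `j ≥ 1`. -/
def cseq {n r : ℕ} (σx : Fin n → Fin n → ℝ → ℝ) (σw : Fin n → Fin r → ℝ → ℝ)
    (w : Vec r) : ℕ → Fin n → ℝ
  | 0 => fun i => ∑ c, σw i c (|w c|)
  | j + 1 => fun i => ∑ b, σx i b (cseq σx σw w j b)

/-!
Along the nominal trajectories the disturbance and the input coincide for both initial states,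
so Assumption 1 degenerates into a component-wise modulus of continuity in the state alone.
Since the moduli are increasing, the component-wise deviation bounds `c_{·,j}` propagate one step
to `c_{·,j+1}`, and induction on `j` concludes.
-/

theorem ClassK.map_zero {α : ℝ → ℝ} (hα : ClassK α) : α 0 = 0 := hα.1

theorem ClassK.monotoneOn {α : ℝ → ℝ} (hα : ClassK α) : MonotoneOn α (Set.Ici 0) :=
  hα.2.2.1.monotoneOn

theorem sum_classK_abs_sub_self {n k : ℕ} {σ : Fin n → Fin k → ℝ → ℝ}
    (hσ : ∀ i c, ClassK (σ i c)) (i : Fin n) (v : Vec k) :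
    ∑ c, σ i c (|v c - v c|) = 0 :=
  Finset.sum_eq_zero fun c _ => by simp [(hσ i c).map_zero]

theorem sum_modulus_le {n : ℕ} {σ : Fin n → ℝ → ℝ} (hσ : ∀ a, MonotoneOn (σ a) (Set.Ici 0))
    {e d : Fin n → ℝ} (he : ∀ a, 0 ≤ e a) (hed : ∀ a, e a ≤ d a) :
    ∑ a, σ a (e a) ≤ ∑ a, σ a (d a) :=
  Finset.sum_le_sum fun a _ =>
    hσ a (Set.mem_Ici.2 (he a)) (Set.mem_Ici.2 ((he a).trans (hed a))) (hed a)

theorem abs_traj_sub_le_cseq {n m r : ℕ} {f : Vec n → Vec m → Vec r → Vec n} {X : Set (Vec n)}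
    {σx : Fin n → Fin n → ℝ → ℝ} {σw : Fin n → Fin r → ℝ → ℝ}
    (hσx : ∀ i a, MonotoneOn (σx i a) (Set.Ici 0)) {u : ℕ → Vec m} {v : ℕ → Vec r}
    (hmod : ∀ j, ∀ y ∈ X, ∀ y' ∈ X, ∀ i,
      |f y (u j) (v j) i - f y' (u j) (v j) i| ≤ ∑ a, σx i a (|y a - y' a|))
    {w : Vec r} {x xv : Vec n} (hinit : ∀ i, |xv i - x i| ≤ cseq σx σw w 0 i) {J : ℕ}
    (htx : ∀ j ≤ J, traj f x u v j ∈ X) (htxv : ∀ j ≤ J, traj f xv u v j ∈ X) :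
    ∀ j ≤ J, ∀ i, |traj f xv u v j i - traj f x u v j i| ≤ cseq σx σw w j i := by
  intro j hj
  induction j with
  | zero => exact hinit
  | succ j ih =>
    intro i
    have hjJ : j ≤ J := j.le_succ.trans hj
    calc |traj f xv u v (j + 1) i - traj f x u v (j + 1) i|
        ≤ ∑ a, σx i a (|traj f xv u v j a - traj f x u v j a|) :=
          hmod j _ (htxv j hjJ) _ (htx j hjJ) i
      _ ≤ cseq σx σw w (j + 1) i :=
          sum_modulus_le (hσx i) (fun _ => abs_nonneg _) (ih hjJ)

/-- component-wise bound on the deviation between two nominal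
trajectories whose initial conditions differ component-wise by at most
`c_{i,0}(w)`. -/
theorem componentwise_trajectory_deviation {n m r : ℕ}
    (f : Vec n → Vec m → Vec r → Vec n)
    (X : Set (Vec n)) (U : Set (Vec m)) (wbar : Fin r → ℝ)
    (σx : Fin n → Fin n → ℝ → ℝ) (σu : Fin n → Fin m → ℝ → ℝ)
    (σw : Fin n → Fin r → ℝ → ℝ)
    (hσx : ∀ i a, ClassK (σx i a)) (hσu : ∀ i b, ClassK (σu i b))
    (hσw : ∀ i c, ClassK (σw i c))
    (hf : ∀ x ∈ X, ∀ u ∈ U, ∀ w ∈ {w : Vec r | ∀ i, |w i| ≤ wbar i},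
      ∀ x' ∈ X, ∀ u' ∈ U, ∀ w' ∈ {w : Vec r | ∀ i, |w i| ≤ wbar i}, ∀ i,
        |f x u w i - f x' u' w' i| ≤
          (∑ a, σx i a (|x a - x' a|)) + (∑ b, σu i b (|u b - u' b|)) +
            ∑ c, σw i c (|w c - w' c|))
    (w : Vec r) (hw : ∀ i, |w i| ≤ wbar i)
    (x xv : Vec n)
    (hinit : ∀ i, |xv i - x i| ≤ cseq σx σw w 0 i)
    (u : ℕ → Vec m) (hu : ∀ j, u j ∈ U) (J : ℕ)
    (htx : ∀ j ≤ J, traj f x u (fun _ => (0 : Vec r)) j ∈ X)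
    (htxv : ∀ j ≤ J, traj f xv u (fun _ => (0 : Vec r)) j ∈ X) :
    ∀ j ≤ J, ∀ i,
      |traj f xv u (fun _ => (0 : Vec r)) j i -
          traj f x u (fun _ => (0 : Vec r)) j i| ≤ cseq σx σw w j i := by
  have hzero : (0 : Vec r) ∈ {w : Vec r | ∀ i, |w i| ≤ wbar i} := fun c => by
    simpa using (abs_nonneg (w c)).trans (hw c)
  have hmod : ∀ j, ∀ y ∈ X, ∀ y' ∈ X, ∀ i,
      |f y (u j) 0 i - f y' (u j) 0 i| ≤ ∑ a, σx i a (|y a - y' a|) := by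
    intro j y hy y' hy' i
    simpa only [sum_classK_abs_sub_self hσu, sum_classK_abs_sub_self hσw, add_zero] using
      hf y hy _ (hu j) 0 hzero y' hy' _ (hu j) 0 hzero i
  exact abs_traj_sub_le_cseq (fun i a => (hσx i a).monotoneOn) hmod hinit htx htxv
end
end

section
/- Suppose f is component-wise Lipschitz continuous on 𝒳 × 𝒰 × 𝒲: there are nonnegative constants L_{x,ia}, L_{u,ib}, L_{w,ic} such that |f_i(x,u,w) − f_i(x̌,ǔ,w̌)| ≤ Σ_{a=1}^n L_{x,ia}|x_a − x̌_a| + Σ_{b=1}^m L_{u,ib}|u_b − ǔ_b| + Σ_{c=1}^r L_{w,ic}|w_c − w̌_c| for every i and all points of 𝒳 × 𝒰 × 𝒲. Define c_{i,0} := Σ_{c=1}^r L_{w,ic}·w̄_c, recursively c_{i,j} := Σ_{a=1}^n L_{x,ia}·c_{a,j−1} for j ≥ 1, and d_{i,j} := Σ_{k=0}^{j−1} c_{i,k} (with d_{i,0} := 0). Then for every x ∈ 𝒳, every input sequence 𝐮 with values in 𝒰 and every disturbance sequence 𝐰 with values in 𝒲 such that φ(j;x,𝐮,𝐰) ∈ 𝒳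 and φ(j;x,𝐮,0) ∈ 𝒳 for j = 0,…,J, one has |φ(j;x,𝐮,𝐰)_i − φ(j;x,𝐮,0)_i| ≤ d_{i,j} for every i = 1,…,n and every j = 0,…,J. -/
open Pointwise

noncomputable section

/-- The constants `c_{i,j}` for a component-wise Lipschitz system:
`c_{i,0} = Σ_c L_{w,ic}·w̄_c` and `c_{i,j} = Σ_a L_{x,ia}·c_{a,j−1}`. -/
def cLip {n r : ℕ} (Lx : Fin n → Fin n → ℝ) (Lw : Fin n → Fin r → ℝ)
    (wbar : Fin r → ℝ) : ℕ → Fin n → ℝ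
  | 0 => fun i => ∑ c, Lw i c * wbar c
  | j + 1 => fun i => ∑ a, Lx i a * cLip Lx Lw wbar j a

/-- The constants `d_{i,j} := Σ_{k=0}^{j−1} c_{i,k}` (so `d_{i,0} = 0`). -/
def dLip {n r : ℕ} (Lx : Fin n → Fin n → ℝ) (Lw : Fin n → Fin r → ℝ)
    (wbar : Fin r → ℝ) (j : ℕ) (i : Fin n) : ℝ :=
  ∑ k ∈ Finset.range j, cLip Lx Lw wbar k i

theorem dLip_succ {n r : ℕ} (Lx : Fin n → Fin n → ℝ) (Lw : Fin n → Fin r → ℝ)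
    (wbar : Fin r → ℝ) (j : ℕ) (i : Fin n) :
    dLip Lx Lw wbar (j + 1) i =
      ∑ a, Lx i a * dLip Lx Lw wbar j a + ∑ c, Lw i c * wbar c := by
  simp only [dLip, Finset.sum_range_succ', cLip, Finset.mul_sum]
  rw [Finset.sum_comm]

/-- Comparison principle for the linear recursion `d_{j+1} = L_x d_j + L_w w̄` defining `dLip`. -/
theorem abs_le_dLip_of_abs_succ_le {n r : ℕ} {Lx : Fin n → Fin n → ℝ}
    {Lw : Fin n → Fin r → ℝ} {wbar : Fin r → ℝ} (hLx : ∀ i a, 0 ≤ Lx i a)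
    {e : ℕ → Fin n → ℝ} {J : ℕ} (he₀ : ∀ i, e 0 i = 0)
    (he : ∀ j < J, ∀ i, |e (j + 1) i| ≤ ∑ a, Lx i a * |e j a| + ∑ c, Lw i c * wbar c) :
    ∀ j ≤ J, ∀ i, |e j i| ≤ dLip Lx Lw wbar j i := by
  intro j hj
  induction j with
  | zero => simp [he₀, dLip]
  | succ j ih =>
    intro i
    calc |e (j + 1) i| ≤ ∑ a, Lx i a * |e j a| + ∑ c, Lw i c * wbar c := he j hj i
      _ ≤ ∑ a, Lx i a * dLip Lx Lw wbar j a + ∑ c, Lw i c * wbar c := by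
          gcongr with a
          · exact hLx i a
          · exact ih (by omega) a
      _ = dLip Lx Lw wbar (j + 1) i := (dLip_succ ..).symm

theorem abs_apply_sub_apply_zero_le {n m r : ℕ} {f : Vec n → Vec m → Vec r → Vec n}
    {X : Set (Vec n)} {U : Set (Vec m)} {wbar : Fin r → ℝ} {Lx : Fin n → Fin n → ℝ}
    {Lu : Fin n → Fin m → ℝ} {Lw : Fin n → Fin r → ℝ} (hLw : ∀ i c, 0 ≤ Lw i c)
    (hf : ∀ x ∈ X, ∀ u ∈ U, ∀ w ∈ {w : Vec r | ∀ i, |w i| ≤ wbar i},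
      ∀ x' ∈ X, ∀ u' ∈ U, ∀ w' ∈ {w : Vec r | ∀ i, |w i| ≤ wbar i}, ∀ i,
        |f x u w i - f x' u' w' i| ≤
          (∑ a, Lx i a * |x a - x' a|) + (∑ b, Lu i b * |u b - u' b|) +
            ∑ c, Lw i c * |w c - w' c|)
    {x x' : Vec n} (hx : x ∈ X) (hx' : x' ∈ X) {u : Vec m} (hu : u ∈ U)
    {w : Vec r} (hw : ∀ c, |w c| ≤ wbar c) (i : Fin n) :
    |f x u w i - f x' u 0 i| ≤ ∑ a, Lx i a * |x a - x' a| + ∑ c, Lw i c * wbar c := by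
  have h₀ : (0 : Vec r) ∈ {w : Vec r | ∀ c, |w c| ≤ wbar c} := fun c => by
    simpa using (abs_nonneg _).trans (hw c)
  calc |f x u w i - f x' u 0 i|
      ≤ ∑ a, Lx i a * |x a - x' a| + ∑ c, Lw i c * |w c| := by
        simpa using hf x hx u hu w hw x' hx' u hu 0 h₀ i
    _ ≤ ∑ a, Lx i a * |x a - x' a| + ∑ c, Lw i c * wbar c := by
        gcongr with c
        · exact hLw i c
        · exact hw c

theorem lipschitz_disturbance_propagation_general {n m r : ℕ}
    (f : Vec n → Vec m → Vec r → Vec n)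
    (X : Set (Vec n)) (U : Set (Vec m)) (wbar : Fin r → ℝ)
    (Lx : Fin n → Fin n → ℝ) (Lu : Fin n → Fin m → ℝ) (Lw : Fin n → Fin r → ℝ)
    (hLx : ∀ i a, 0 ≤ Lx i a)
    (hLw : ∀ i c, 0 ≤ Lw i c)
    (hf : ∀ x ∈ X, ∀ u ∈ U, ∀ w ∈ {w : Vec r | ∀ i, |w i| ≤ wbar i},
      ∀ x' ∈ X, ∀ u' ∈ U, ∀ w' ∈ {w : Vec r | ∀ i, |w i| ≤ wbar i}, ∀ i,
        |f x u w i - f x' u' w' i| ≤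
          (∑ a, Lx i a * |x a - x' a|) + (∑ b, Lu i b * |u b - u' b|) +
            ∑ c, Lw i c * |w c - w' c|)
    (x : Vec n)
    (u : ℕ → Vec m) (hu : ∀ j, u j ∈ U)
    (w : ℕ → Vec r) (hw : ∀ j, ∀ i, |w j i| ≤ wbar i) (J : ℕ)
    (htw : ∀ j ≤ J, traj f x u w j ∈ X)
    (ht0 : ∀ j ≤ J, traj f x u (fun _ => (0 : Vec r)) j ∈ X) :
    ∀ j ≤ J, ∀ i,
      |traj f x u w j i - traj f x u (fun _ => (0 : Vec r)) j i| ≤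
        dLip Lx Lw wbar j i := by
  refine abs_le_dLip_of_abs_succ_le hLx (fun i => sub_self (x i)) fun j hj i => ?_
  exact abs_apply_sub_apply_zero_le hLw hf (htw j hj.le) (ht0 j hj.le) (hu j) (hw j) i

/-- for a component-wise Lipschitz system, the deviation between
the perturbed and the nominal trajectory is component-wise bounded by
`d_{i,j}`. -/
theorem lipschitz_disturbance_propagation {n m r : ℕ}
    (f : Vec n → Vec m → Vec r → Vec n)
    (X : Set (Vec n)) (U : Set (Vec m)) (wbar : Fin r → ℝ)
    (Lx : Fin n → Fin n → ℝ) (Lu : Fin n → Fin m → ℝ) (Lw : Fin n → Fin r → ℝ)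
    (hLx : ∀ i a, 0 ≤ Lx i a) (hLu : ∀ i b, 0 ≤ Lu i b)
    (hLw : ∀ i c, 0 ≤ Lw i c)
    (hf : ∀ x ∈ X, ∀ u ∈ U, ∀ w ∈ {w : Vec r | ∀ i, |w i| ≤ wbar i},
      ∀ x' ∈ X, ∀ u' ∈ U, ∀ w' ∈ {w : Vec r | ∀ i, |w i| ≤ wbar i}, ∀ i,
        |f x u w i - f x' u' w' i| ≤
          (∑ a, Lx i a * |x a - x' a|) + (∑ b, Lu i b * |u b - u' b|) +
            ∑ c, Lw i c * |w c - w' c|)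
    (x : Vec n) (hx : x ∈ X)
    (u : ℕ → Vec m) (hu : ∀ j, u j ∈ U)
    (w : ℕ → Vec r) (hw : ∀ j, ∀ i, |w j i| ≤ wbar i) (J : ℕ)
    (htw : ∀ j ≤ J, traj f x u w j ∈ X)
    (ht0 : ∀ j ≤ J, traj f x u (fun _ => (0 : Vec r)) j ∈ X) :
    ∀ j ≤ J, ∀ i,
      |traj f x u w j i - traj f x u (fun _ => (0 : Vec r)) j i| ≤
        dLip Lx Lw wbar j i :=
  lipschitz_disturbance_propagation_general f X U wbar Lx Lu Lw hLx hLw hf x u hu w hw J htw ht0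
end
end

section
/- Let A ∈ ℝ^{n×n}, B ∈ ℝ^{n×m}, K ∈ ℝ^{m×n}, let P, Q ∈ ℝ^{n×n} and R ∈ ℝ^{m×m} be symmetric positive definite matrices, and let κ ∈ (0,1). Set S := P⁻¹, O := K·P⁻¹ and A_K := A + B·K. Then the symmetric block matrix M := [[(1−κ)S, (AS+BO)ᵀ, S, Oᵀ], [AS+BO, S, 0, 0], [S, 0, Q⁻¹, 0], [O, 0, 0, R⁻¹]] is positive semidefinite if and only if A_Kᵀ·P·A_K − (1−κ)P + Q + Kᵀ·R·K is negative semidefinite. -/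
open Pointwise

noncomputable section

open Matrix

/-- A real symmetric matrix is negative semidefinite:
`zᵀ M z ≤ 0` for all vectors `z`. -/
def NegSemidefR {k : ℕ} (M : Matrix (Fin k) (Fin k) ℝ) : Prop :=
  M.IsSymm ∧ ∀ z : Fin k → ℝ, z ⬝ᵥ M.mulVec z ≤ 0

/-! Two Schur complements, first with respect to the positive definite block
`diag(Q⁻¹, R⁻¹)` and then with respect to `S = P⁻¹`, turn positive semidefiniteness of the
LMI into that of `S * (-Λ) * S`, where `Λ` is the Lyapunov-type matrix on the right;
congruence by the invertible `S` then removes the outer factors. -/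

open scoped ComplexOrder

namespace Matrix

variable {𝕜 : Type*} [RCLike 𝕜] {l r : Type*} [Fintype l] [Fintype r]

theorem PosDef.fromBlocks_zero [DecidableEq l] [DecidableEq r] {A : Matrix l l 𝕜}
    {D : Matrix r r 𝕜} (hA : A.PosDef) (hD : D.PosDef) : (fromBlocks A 0 0 D).PosDef := by
  have : Invertible D := hD.isUnit.invertible
  have hpsd : (fromBlocks A 0 0ᴴ D).PosSemidef :=
    (PosDef.fromBlocks₂₂ A 0 hD).mpr (by simpa using hA.posSemidef)
  rw [conjTranspose_zero] at hpsd
  exact hpsd.posDef_iff_isUnit.mpr (isUnit_fromBlocks_zero₁₂.mpr ⟨hA.isUnit, hD.isUnit⟩)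

theorem IsHermitian.posSemidef_conj_iff [DecidableEq l] {S X : Matrix l l 𝕜}
    (hS : S.IsHermitian) (hSu : IsUnit S) : (S * X * S).PosSemidef ↔ X.PosSemidef := by
  simpa [star_eq_conjTranspose, hS.eq] using hSu.posSemidef_star_right_conjugate_iff (x := X)

theorem inv_fromBlocks_inv_zero_zero_inv {α : Type*} [CommRing α] [DecidableEq l]
    [DecidableEq r] {Q : Matrix l l α} {R : Matrix r r α} (hQ : IsUnit Q) (hR : IsUnit R) :
    (fromBlocks Q⁻¹ 0 0 R⁻¹)⁻¹ = fromBlocks Q 0 0 R := by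
  rw [inv_fromBlocks_zero₁₂_of_isUnit_iff _ _ _
      (iff_of_true (isUnit_nonsing_inv_iff.mpr hQ) (isUnit_nonsing_inv_iff.mpr hR)),
    nonsing_inv_nonsing_inv _ ((isUnit_iff_isUnit_det _).mp hQ),
    nonsing_inv_nonsing_inv _ ((isUnit_iff_isUnit_det _).mp hR)]
  simp

end Matrix

theorem negSemidefR_iff_posSemidef_neg {k : ℕ} (M : Matrix (Fin k) (Fin k) ℝ) :
    NegSemidefR M ↔ (-M).PosSemidef := by
  simp only [NegSemidefR, IsSymm, posSemidef_iff_dotProduct_mulVec, IsHermitian,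
    conjTranspose_eq_transpose_of_trivial, transpose_neg, neg_inj, star_trivial, neg_mulVec,
    dotProduct_neg, neg_nonneg]

theorem posSemidef_terminalLMI_iff {l r : Type*} [Fintype l] [Fintype r] [DecidableEq l]
    [DecidableEq r] {S Q : Matrix l l ℝ} {R : Matrix r r ℝ}
    (hS : S.PosDef) (hQ : Q.PosDef) (hR : R.PosDef) (A_K : Matrix l l ℝ) (K : Matrix r l ℝ)
    (κ : ℝ) :
    (fromBlocks (fromBlocks ((1 - κ) • S) (A_K * S)ᵀ (A_K * S) S) (fromBlocks S (K * S)ᵀ 0 0)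
      (fromBlocks S (K * S)ᵀ 0 0)ᴴ (fromBlocks Q⁻¹ 0 0 R⁻¹)).PosSemidef ↔
    (-(A_Kᵀ * S⁻¹ * A_K - (1 - κ) • S⁻¹ + Q + Kᵀ * R * K)).PosSemidef := by
  have hD : (fromBlocks Q⁻¹ (0 : Matrix l r ℝ) 0 R⁻¹).PosDef :=
    hQ.inv.fromBlocks_zero hR.inv
  have : Invertible S := hS.isUnit.invertible
  have : Invertible (fromBlocks Q⁻¹ (0 : Matrix l r ℝ) 0 R⁻¹) := hD.isUnit.invertible
  have hSt : Sᵀ = S := hS.1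
  have hSSinv : S * S⁻¹ = 1 := mul_inv_of_invertible S
  have houter : fromBlocks ((1 - κ) • S) (A_K * S)ᵀ (A_K * S) S -
      fromBlocks S (K * S)ᵀ 0 0 * fromBlocks Q 0 0 R * (fromBlocks S (K * S)ᵀ 0 0)ᴴ =
      fromBlocks ((1 - κ) • S - (S * Q * S + (K * S)ᵀ * R * (K * S))) (A_K * S)ᵀ
        (A_K * S)ᵀᴴ S := by
    simp [fromBlocks_multiply, fromBlocks_transpose, sub_eq_add_neg, fromBlocks_neg,
      fromBlocks_add, hSt, Matrix.mul_assoc]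
  have hinner : (1 - κ) • S - (S * Q * S + (K * S)ᵀ * R * (K * S)) -
      (A_K * S)ᵀ * S⁻¹ * (A_K * S)ᵀᴴ =
      S * -(A_Kᵀ * S⁻¹ * A_K - (1 - κ) • S⁻¹ + Q + Kᵀ * R * K) * S := by
    simp only [conjTranspose_eq_transpose_of_trivial, transpose_transpose, transpose_mul, hSt,
      mul_neg, neg_mul, Matrix.mul_add, Matrix.mul_sub, Matrix.add_mul, Matrix.sub_mul,
      smul_mul_assoc, mul_smul_comm, Matrix.mul_assoc]
    simp only [← Matrix.mul_assoc S S⁻¹, hSSinv, Matrix.one_mul]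
    abel
  rw [PosDef.fromBlocks₂₂ _ _ hD, inv_fromBlocks_inv_zero_zero_inv hQ.isUnit hR.isUnit, houter,
    PosDef.fromBlocks₂₂ _ _ hS, hinner, hS.1.posSemidef_conj_iff hS.isUnit]

theorem terminal_LMI_iff_general {n m : ℕ}
    (A : Matrix (Fin n) (Fin n) ℝ) (B : Matrix (Fin n) (Fin m) ℝ)
    (K : Matrix (Fin m) (Fin n) ℝ)
    (P Q : Matrix (Fin n) (Fin n) ℝ) (R : Matrix (Fin m) (Fin m) ℝ)
    (hP : P.PosDef) (hQ : Q.PosDef) (hR : R.PosDef)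
    (κ : ℝ) :
    (Matrix.fromBlocks
        (Matrix.fromBlocks ((1 - κ) • P⁻¹) (A * P⁻¹ + B * (K * P⁻¹))ᵀ
          (A * P⁻¹ + B * (K * P⁻¹)) P⁻¹)
        (Matrix.fromBlocks P⁻¹ (K * P⁻¹)ᵀ 0 0)
        (Matrix.fromBlocks P⁻¹ 0 (K * P⁻¹) 0)
        (Matrix.fromBlocks Q⁻¹ 0 0 R⁻¹)).PosSemidef ↔
      NegSemidefR
        ((A + B * K)ᵀ * P * (A + B * K) - (1 - κ) • P + Q + Kᵀ * R * K) := by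
  have hlower : fromBlocks P⁻¹ 0 (K * P⁻¹) (0 : Matrix (Fin m) (Fin n) ℝ) =
      (fromBlocks P⁻¹ (K * P⁻¹)ᵀ 0 0)ᴴ := by
    have hSt : (P⁻¹)ᵀ = P⁻¹ := hP.inv.1
    simp [conjTranspose_eq_transpose_of_trivial, fromBlocks_transpose, hSt]
  rw [← Matrix.mul_assoc B, ← Matrix.add_mul, hlower, posSemidef_terminalLMI_iff hP.inv hQ hR,
    nonsing_inv_nonsing_inv _ ((isUnit_iff_isUnit_det P).mp hP.isUnit),
    negSemidefR_iff_posSemidef_neg]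

/-- the LMI for the terminal ingredients. With `S = P⁻¹`,
`O = K·P⁻¹` and `A_K = A + B·K`, the 4×4 block matrix is positive semidefinite
iff `A_Kᵀ·P·A_K − (1−κ)·P + Q + Kᵀ·R·K` is negative semidefinite. -/
theorem terminal_LMI_iff {n m : ℕ}
    (A : Matrix (Fin n) (Fin n) ℝ) (B : Matrix (Fin n) (Fin m) ℝ)
    (K : Matrix (Fin m) (Fin n) ℝ)
    (P Q : Matrix (Fin n) (Fin n) ℝ) (R : Matrix (Fin m) (Fin m) ℝ)
    (hP : P.PosDef) (hQ : Q.PosDef) (hR : R.PosDef)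
    (κ : ℝ) (hκ : κ ∈ Set.Ioo (0 : ℝ) 1) :
    (Matrix.fromBlocks
        (Matrix.fromBlocks ((1 - κ) • P⁻¹) (A * P⁻¹ + B * (K * P⁻¹))ᵀ
          (A * P⁻¹ + B * (K * P⁻¹)) P⁻¹)
        (Matrix.fromBlocks P⁻¹ (K * P⁻¹)ᵀ 0 0)
        (Matrix.fromBlocks P⁻¹ 0 (K * P⁻¹) 0)
        (Matrix.fromBlocks Q⁻¹ 0 0 R⁻¹)).PosSemidef ↔
      NegSemidefR
        ((A + B * K)ᵀ * P * (A + B * K) - (1 - κ) • P + Q + Kᵀ * R * K) :=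
  terminal_LMI_iff_general A B K P Q R hP hQ hR κ
end
end

section
/- Let A ∈ ℝ^{n×n}, B ∈ ℝ^{n×m}, K ∈ ℝ^{m×n}, let P, Q ∈ ℝ^{n×n} and R ∈ ℝ^{m×m} be symmetric matrices, let κ ∈ (0,1) and β > 0, and let f_cl : ℝⁿ → ℝⁿ be any map. Define A_K := A + B·K, the linearization error e(x) := f_cl(x) − A_K·x, the terminal cost V_f(x) := xᵀPx, the stage cost ℓ(x,u) := xᵀQx + uᵀRu, and the terminal set 𝒳_f := {x ∈ ℝⁿ : xᵀPx ≤ β}. Assume (i) e(x)ᵀ·P·e(x) + 2·xᵀ·A_Kᵀ·P·e(x) ≤ κ·xᵀPx for all x ∈ 𝒳_f, and (ii) A_Kᵀ·P·A_K − (1−κ)P + Q + Kᵀ·R·K is negative semidefinite. Then V_f(f_cl(x)) − V_f(x) ≤ −ℓ(x, K·x) for all x ∈ 𝒳_f. -/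
/-!
Write `f_cl x = A_K x + e x`. Since `P` is symmetric,
`V_f (f_cl x) = (A_K x)ᵀ P (A_K x) + 2 (A_K x)ᵀ P e + eᵀ P e`; the last two terms are at most
`κ V_f x` by (i), and (ii) evaluated at `x` bounds the first by `(1 - κ) V_f x - ℓ(x, K x)`.
-/

open Pointwise

noncomputable section

open Matrix

namespace Matrix

variable {m n : Type*} [Fintype m] [Fintype n] {α : Type*} [CommSemiring α]

theorem dotProduct_transpose_mul_mulVec (M : Matrix m n α) (P : Matrix m m α) (x : n → α)
    (y : m → α) :
    x ⬝ᵥ (Mᵀ * P) *ᵥ y = M *ᵥ x ⬝ᵥ P *ᵥ y := by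
  rw [← mulVec_mulVec, dotProduct_mulVec, vecMul_transpose]

theorem dotProduct_transpose_mul_mul_mulVec (M N : Matrix m n α) (P : Matrix m m α)
    (x y : n → α) : x ⬝ᵥ (Mᵀ * P * N) *ᵥ y = M *ᵥ x ⬝ᵥ P *ᵥ (N *ᵥ y) := by
  rw [← mulVec_mulVec, dotProduct_transpose_mul_mulVec]

theorem IsSymm.dotProduct_mulVec_comm {P : Matrix n n α} (hP : P.IsSymm) (u v : n → α) :
    u ⬝ᵥ P *ᵥ v = v ⬝ᵥ P *ᵥ u := by
  rw [dotProduct_mulVec, ← mulVec_transpose, hP.eq, dotProduct_comm]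

theorem IsSymm.dotProduct_mulVec_add_self {P : Matrix n n α} (hP : P.IsSymm) (a e : n → α) :
    (a + e) ⬝ᵥ P *ᵥ (a + e) = a ⬝ᵥ P *ᵥ a + 2 * (a ⬝ᵥ P *ᵥ e) + e ⬝ᵥ P *ᵥ e := by
  simp only [mulVec_add, dotProduct_add, add_dotProduct, hP.dotProduct_mulVec_comm e a]
  ring

end Matrix

theorem terminal_cost_is_local_CLF_general {n m : ℕ}
    (A : Matrix (Fin n) (Fin n) ℝ) (B : Matrix (Fin n) (Fin m) ℝ)
    (K : Matrix (Fin m) (Fin n) ℝ)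
    (P Q : Matrix (Fin n) (Fin n) ℝ) (R : Matrix (Fin m) (Fin m) ℝ)
    (hP : P.IsSymm)
    (κ β : ℝ)
    (fcl : (Fin n → ℝ) → (Fin n → ℝ))
    (hi : ∀ x : Fin n → ℝ, x ⬝ᵥ P.mulVec x ≤ β →
      (fcl x - (A + B * K).mulVec x) ⬝ᵥ
          P.mulVec (fcl x - (A + B * K).mulVec x) +
        2 * (x ⬝ᵥ ((A + B * K)ᵀ * P).mulVec (fcl x - (A + B * K).mulVec x)) ≤
          κ * (x ⬝ᵥ P.mulVec x))
    (hii : NegSemidefR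
      ((A + B * K)ᵀ * P * (A + B * K) - (1 - κ) • P + Q + Kᵀ * R * K)) :
    ∀ x : Fin n → ℝ, x ⬝ᵥ P.mulVec x ≤ β →
      fcl x ⬝ᵥ P.mulVec (fcl x) - x ⬝ᵥ P.mulVec x ≤
        -(x ⬝ᵥ Q.mulVec x + K.mulVec x ⬝ᵥ R.mulVec (K.mulVec x)) := by
  intro x hx
  set e := fcl x - (A + B * K) *ᵥ x
  have hexpand : fcl x ⬝ᵥ P *ᵥ fcl x = (A + B * K) *ᵥ x ⬝ᵥ P *ᵥ ((A + B * K) *ᵥ x)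
      + 2 * ((A + B * K) *ᵥ x ⬝ᵥ P *ᵥ e) + e ⬝ᵥ P *ᵥ e := by
    rw [← hP.dotProduct_mulVec_add_self, add_sub_cancel]
  have herror := hi x hx
  rw [dotProduct_transpose_mul_mulVec] at herror
  have hdecrease := hii.2 x
  rw [add_mulVec, add_mulVec, sub_mulVec, smul_mulVec] at hdecrease
  simp only [dotProduct_add, dotProduct_sub, dotProduct_smul, smul_eq_mul,
    dotProduct_transpose_mul_mul_mulVec] at hdecrease
  linarith

/-- if the linearization-error bound (i) and the matrix
inequality (ii) hold, then `V_f(x) = xᵀPx` decreases along the closed-loop map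
`f_cl` at least by the stage cost `ℓ(x, Kx)` on the terminal set
`𝒳_f = {x : xᵀPx ≤ β}`. -/
theorem terminal_cost_is_local_CLF {n m : ℕ}
    (A : Matrix (Fin n) (Fin n) ℝ) (B : Matrix (Fin n) (Fin m) ℝ)
    (K : Matrix (Fin m) (Fin n) ℝ)
    (P Q : Matrix (Fin n) (Fin n) ℝ) (R : Matrix (Fin m) (Fin m) ℝ)
    (hP : P.IsSymm) (hQ : Q.IsSymm) (hR : R.IsSymm)
    (κ β : ℝ) (hκ : κ ∈ Set.Ioo (0 : ℝ) 1) (hβ : 0 < β)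
    (fcl : (Fin n → ℝ) → (Fin n → ℝ))
    (hi : ∀ x : Fin n → ℝ, x ⬝ᵥ P.mulVec x ≤ β →
      (fcl x - (A + B * K).mulVec x) ⬝ᵥ
          P.mulVec (fcl x - (A + B * K).mulVec x) +
        2 * (x ⬝ᵥ ((A + B * K)ᵀ * P).mulVec (fcl x - (A + B * K).mulVec x)) ≤
          κ * (x ⬝ᵥ P.mulVec x))
    (hii : NegSemidefR
      ((A + B * K)ᵀ * P * (A + B * K) - (1 - κ) • P + Q + Kᵀ * R * K)) :
    ∀ x : Fin n → ℝ, x ⬝ᵥ P.mulVec x ≤ β →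
      fcl x ⬝ᵥ P.mulVec (fcl x) - x ⬝ᵥ P.mulVec x ≤
        -(x ⬝ᵥ Q.mulVec x + K.mulVec x ⬝ᵥ R.mulVec (K.mulVec x)) :=
  terminal_cost_is_local_CLF_general A B K P Q R hP κ β fcl hi hii
end
end
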